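/- Let a, b ∈ ℝ with a > 0. Set ω' = [[0, a/(1+b²)], [-a/(1+b²), 0]] and B' = [[0, ab/(1+b²)], [-ab/(1+b²), 0]]. Then the B-field transform exp(-B') ∘ 𝒥_{ω'} ∘ exp(B') equals [[-b, 0, 0, (1+b²)/a], [0, -b, -(1+b²)/a, 0], [0, a, b, 0], [-a, 0, 0, b]], where 𝒥_{ω'} = [[0, -ω'⁻¹], [ω', 0]] and exp(B') = [[I, 0], [B', I]]. -/
import Mathlib


open Matrix

theorem stmt_7 (a b : ℝ) (ha : 0 < a) :
    let ω' : Matrix (Fin 2) (Fin 2) ℝ := !![0, a/(1+b^2); -(a/(1+b^2)), 0]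
    let ω'inv : Matrix (Fin 2) (Fin 2) ℝ := !![0, -((1+b^2)/a); (1+b^2)/a, 0]
    let B' : Matrix (Fin 2) (Fin 2) ℝ := !![0, a*b/(1+b^2); -(a*b/(1+b^2)), 0]
    let 𝒥ω' : Matrix (Fin 2 ⊕ Fin 2) (Fin 2 ⊕ Fin 2) ℝ := Matrix.fromBlocks 0 (-ω'inv) ω' 0
    (Matrix.fromBlocks 1 0 (-B') 1 * 𝒥ω' * Matrix.fromBlocks 1 0 B' 1 :
        Matrix (Fin 2 ⊕ Fin 2) (Fin 2 ⊕ Fin 2) ℝ) =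
      Matrix.fromBlocks !![-b, 0; 0, -b] !![0, (1+b^2)/a; -((1+b^2)/a), 0]
        !![0, a; -a, 0] !![b, 0; 0, b] := by
  intro ω' ω'inv B' 𝒥ω'
  have hb : (1:ℝ)+b^2 ≠ 0 := by positivity
  simp only [Matrix.fromBlocks_multiply, 𝒥ω', ω', ω'inv, B']
  ext (i|i) (j|j) <;> fin_cases i <;> fin_cases j <;>
    simp [Matrix.mul_apply, Fin.sum_univ_succ] <;> field_simp <;> ring
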